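/- For every real Δ > 0 and every integer k ≥ 1, writing T_n = Σ_{m=0}^{n} [(−n)_m ((4Δ/3)+n−1)_m (Δ/3)_m] / [((2Δ/3)_m)² m!], one has the two-term recursion T_{2k} = [3(2k−1)(Δ+3k−3) / ((2Δ+3k−3)(2Δ+6k−3))] · T_{2k−2}. In particular the constant of proportionality is positive, so T_{2k} > 0 for every k ≥ 0. -/

import Mathlib

/-- Pochhammer symbol `(x)_m = x(x+1)⋯(x+m−1)`, with `(x)_0 = 1`. -/
noncomputable def poch (x : ℝ) : ℕ → ℝ
  | 0 => 1
  | m + 1 => poch x m * (x + m)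

open Finset Polynomial

/-!
With `b = 2Δ/3`, `T n` is the terminating series `₃F₂(-n, n + 2b - 1, b/2; b, b; 1)` of Watson type.
Zeilberger's algorithm gives a certificate `G(n, m)` for which the summands `F(n, m)` satisfy
`(n + 2b - 1)(n + 2) [(n + 2b)(n + b + 1) F(n+2, m) - (n + 1)(n + b) F(n, m)]
  = -2 (2n + 2b + 1) (G(n, m+1) - G(n, m))`.
Summing over `m` telescopes, giving a two-term recurrence from `T n` to `T (n + 2)` with positive
coefficients, so `T (2k) > 0` follows from `T 0 = 1`.
-/

lemma poch_eq_eval (x : ℝ) (m : ℕ) : poch x m = (ascPochhammer ℝ m).eval x := by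
  induction m with
  | zero => simp [poch]
  | succ m ih => rw [poch, ih, ascPochhammer_succ_eval]

lemma poch_succ_left (x : ℝ) (m : ℕ) : poch x (m + 1) = x * poch (x + 1) m := by
  simp [poch_eq_eval, ascPochhammer_succ_left, eval_comp]

lemma poch_mul_succ_mul (x : ℝ) (m : ℕ) :
    poch x m * ((x + m) * (x + m + 1)) = x * (x + 1) * poch (x + 2) m := by
  have h := poch_succ_left x (m + 1)
  rw [poch_succ_left (x + 1), poch, poch] at h
  rw [add_assoc x 1 1, one_add_one_eq_two] at h
  push_cast at h
  linear_combination h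

lemma poch_pos {x : ℝ} (hx : 0 < x) (m : ℕ) : 0 < poch x m := by
  rw [poch_eq_eval]; exact ascPochhammer_pos m x hx

lemma poch_neg_natCast_of_lt {n m : ℕ} (h : n < m) : poch (-(n : ℝ)) m = 0 := by
  rw [poch_eq_eval]; exact ascPochhammer_eval_neg_coe_nat_of_lt h

noncomputable def hahnTerm (b : ℝ) (n m : ℕ) : ℝ :=
  poch (-(n : ℝ)) m * poch (n + 2 * b - 1) m * poch (b / 2) m / (poch b m ^ 2 * m.factorial)

noncomputable def hahnSum (b : ℝ) (n : ℕ) : ℝ :=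
  ∑ m ∈ range (n + 1), hahnTerm b n m

noncomputable def hahnCert (b : ℝ) (n m : ℕ) : ℝ :=
  m * (b + m - 1) ^ 2 * poch (-(n + 2 : ℝ)) m * poch (n + 2 * b - 1) m * poch (b / 2) m
    / (poch b m ^ 2 * m.factorial)

lemma hahnCert_succ {b : ℝ} (hb : 0 < b) (n m : ℕ) :
    hahnCert b n (m + 1) = poch (-(n + 2 : ℝ)) m * (m - n - 2) * poch (n + 2 * b - 1) m
      * (n + 2 * b - 1 + m) * poch (b / 2) m * (b / 2 + m) / (poch b m ^ 2 * m.factorial) := by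
  have := (poch_pos hb m).ne'
  have : b + m ≠ 0 := by positivity
  simp only [hahnCert, poch, Nat.factorial_succ]
  push_cast
  field_simp
  ring

lemma hahnTerm_wz {b : ℝ} (hb : 0 < b) (n m : ℕ) :
    (n + 2 * b - 1) * (n + 2) * ((n + 2 * b) * (n + b + 1) * hahnTerm b (n + 2) m
      - (n + 1) * (n + b) * hahnTerm b n m)
      = -2 * (2 * n + 2 * b + 1) * (hahnCert b n (m + 1) - hahnCert b n m) := by
  have hA := poch_mul_succ_mul (-(n + 2 : ℝ)) m
  have hB := poch_mul_succ_mul (n + 2 * b - 1 : ℝ) m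
  rw [hahnCert_succ hb]
  simp only [hahnTerm, hahnCert]
  push_cast
  rw [show -((n : ℝ) + 2) + 2 = -n by ring] at hA
  rw [show (n : ℝ) + 2 * b - 1 + 2 = n + 2 + 2 * b - 1 by ring] at hB
  set D := poch b m ^ 2 * (m.factorial : ℝ)
  linear_combination ((n + 2 * b - 1) * (n + b) * poch (n + 2 * b - 1) m * poch (b / 2) m / D) * hA
    - ((n + b + 1) * (n + 2) * poch (-(n + 2 : ℝ)) m * poch (b / 2) m / D) * hB

lemma hahnTerm_eq_zero_of_lt (b : ℝ) {n m : ℕ} (h : n < m) : hahnTerm b n m = 0 := by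
  simp [hahnTerm, poch_neg_natCast_of_lt h]

lemma hahnCert_zero (b : ℝ) (n : ℕ) : hahnCert b n 0 = 0 := by
  simp [hahnCert]

lemma hahnCert_add_three (b : ℝ) (n : ℕ) : hahnCert b n (n + 3) = 0 := by
  have h := poch_neg_natCast_of_lt (show n + 2 < n + 3 by omega)
  push_cast at h
  rw [hahnCert, h, mul_zero, zero_mul, zero_mul, zero_div]

lemma hahnSum_add_two_of_ne {b : ℝ} (hb : 0 < b) {n : ℕ} (hn : n + 2 * b - 1 ≠ 0) :
    (n + 2 * b) * (n + b + 1) * hahnSum b (n + 2) = (n + 1) * (n + b) * hahnSum b n := by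
  have htel := sum_congr rfl fun m (_ : m ∈ range (n + 3)) => hahnTerm_wz hb n m
  rw [← mul_sum, ← mul_sum, sum_sub_distrib, ← mul_sum, ← mul_sum, sum_range_sub (hahnCert b n),
    hahnCert_zero, hahnCert_add_three] at htel
  have hpad : ∑ m ∈ range (n + 3), hahnTerm b n m = hahnSum b n := by
    rw [sum_range_succ, sum_range_succ, hahnTerm_eq_zero_of_lt b (by omega : n < n + 1),
      hahnTerm_eq_zero_of_lt b (by omega : n < n + 2), hahnSum]
    ring
  rw [hpad, ← hahnSum, sub_self, mul_zero] at htel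
  have hn2 : (n : ℝ) + 2 ≠ 0 := by positivity
  exact sub_eq_zero.mp ((mul_eq_zero.mp htel).resolve_left (mul_ne_zero hn hn2))

lemma hahnSum_zero (b : ℝ) : hahnSum b 0 = 1 := by
  simp [hahnSum, hahnTerm, poch]

lemma hahnSum_two {b : ℝ} (hb : 0 < b) : hahnSum b 2 = 1 / (2 * (b + 1)) := by
  simp only [hahnSum, sum_range_succ, sum_range_zero, hahnTerm, poch, Nat.factorial]
  push_cast
  field_simp
  ring

lemma hahnSum_add_two {b : ℝ} (hb : 0 < b) (n : ℕ) :
    hahnSum b (n + 2) = (n + 1) * (n + b) / ((n + 2 * b) * (n + b + 1)) * hahnSum b n := by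
  -- the telescoping identity degenerates when `2b = 1`, so `n = 0` is computed directly
  rcases n.eq_zero_or_pos with rfl | hn
  · rw [hahnSum_two hb, hahnSum_zero]
    field_simp
    ring
  · have hn : (1 : ℝ) ≤ n := by exact_mod_cast hn
    rw [div_mul_eq_mul_div, eq_div_iff (by positivity), mul_comm]
    exact hahnSum_add_two_of_ne hb (by linarith)

lemma hahnSum_two_mul_pos {b : ℝ} (hb : 0 < b) (k : ℕ) : 0 < hahnSum b (2 * k) := by
  induction k with
  | zero => simp [hahnSum_zero]
  | succ k ih =>
    rw [mul_add_one, hahnSum_add_two hb]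
    positivity

/-- Effective two-term recursion (2.14) for the continuous Hahn values `T_n`
with positive proportionality constant, hence positivity of the even terms. -/
theorem stmt_9 (Δ : ℝ) (hΔ : 0 < Δ) (T : ℕ → ℝ)
    (hT : ∀ n : ℕ, T n = ∑ m ∈ Finset.range (n + 1),
      (poch (-(n : ℝ)) m * poch (4*Δ/3 + (n : ℝ) - 1) m * poch (Δ/3) m)
      / ((poch (2*Δ/3) m)^2 * (m.factorial : ℝ))) :
    (∀ k : ℕ, 1 ≤ k →
      T (2*k) = (3*(2*(k : ℝ) - 1)*(Δ + 3*(k : ℝ) - 3)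
          / ((2*Δ + 3*(k : ℝ) - 3)*(2*Δ + 6*(k : ℝ) - 3))) * T (2*k - 2)
      ∧ 0 < 3*(2*(k : ℝ) - 1)*(Δ + 3*(k : ℝ) - 3)
          / ((2*Δ + 3*(k : ℝ) - 3)*(2*Δ + 6*(k : ℝ) - 3)))
    ∧ ∀ k : ℕ, 0 < T (2*k) := by
  have hb : 0 < 2 * Δ / 3 := by positivity
  have hT' : T = hahnSum (2 * Δ / 3) := by
    funext n
    rw [hT, hahnSum]
    refine sum_congr rfl fun m _ => ?_
    rw [hahnTerm, show 4 * Δ / 3 + (n : ℝ) - 1 = n + 2 * (2 * Δ / 3) - 1 by ring,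
      show Δ / 3 = 2 * Δ / 3 / 2 by ring]
  refine ⟨fun k hk => ?_, fun k => hT' ▸ hahnSum_two_mul_pos hb k⟩
  obtain ⟨j, rfl⟩ : ∃ j, k = j + 1 := ⟨k - 1, by omega⟩
  have hratio : 3 * (2 * ((j + 1 : ℕ) : ℝ) - 1) * (Δ + 3 * ((j + 1 : ℕ) : ℝ) - 3)
      / ((2 * Δ + 3 * ((j + 1 : ℕ) : ℝ) - 3) * (2 * Δ + 6 * ((j + 1 : ℕ) : ℝ) - 3))
      = ((2 * j : ℕ) + 1) * ((2 * j : ℕ) + 2 * Δ / 3)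
        / (((2 * j : ℕ) + 2 * (2 * Δ / 3)) * ((2 * j : ℕ) + 2 * Δ / 3 + 1)) := by
    have hj : (0 : ℝ) ≤ j := j.cast_nonneg
    push_cast
    rw [div_eq_div_iff (by nlinarith) (by positivity)]
    ring
  rw [hratio, show 2 * (j + 1) = 2 * j + 2 by ring, show 2 * j + 2 - 2 = 2 * j by omega, hT']
  exact ⟨hahnSum_add_two hb (2 * j), by positivity⟩
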